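/- Fix d ≥ 1, γ ∈ ℝ^d, and ε > 0, and define RMSNorm : ℝ^d → ℝ^d by RMSNorm(x)_i = γ_i x_i / rms(x) with rms(x) = sqrt(‖x‖₂²/d + ε). Then rms(x) ≥ ‖x‖₂ / √d for every x, and consequently for every x ≠ 0 the operator norm of the Fréchet derivative of RMSNorm at x satisfies ‖D RMSNorm(x)‖_op ≤ √d · ‖γ‖_∞ / ‖x‖₂. -/

import Mathlib

/-!
Write `RMSNorm = rms⁻¹ • Γ` with `Γ = diag γ`. Since `∇ rms (x) = x / (d · rms x)`, the product
rule gives `D RMSNorm(x) = rms(x)⁻¹ · Γ ∘ (I - t x xᵀ)` with `t = 1 / (d · rms(x)²)`. As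
`t ‖x‖² = (‖x‖² / d) / (‖x‖² / d + ε) ≤ 1`, the map `I - t x xᵀ` is a contraction, so the
derivative has norm at most `‖γ‖_∞ / rms x ≤ √d ‖γ‖_∞ / ‖x‖`.
-/

open RealInnerProductSpace

lemma pi_norm_le_iSup_abs {ι : Type*} [Fintype ι] (f : ι → ℝ) : ‖f‖ ≤ ⨆ i, |f i| :=
  (pi_norm_le_iff_of_nonneg (Real.iSup_nonneg fun i => abs_nonneg (f i))).2 fun i =>
    (Real.norm_eq_abs _).trans_le <| le_ciSup (f := fun i => |f i|) (Set.finite_range _).bddAbove i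

open scoped Matrix.Norms.L2Operator in
lemma Matrix.norm_toEuclideanCLM_diagonal_le {ι : Type*} [Fintype ι] [DecidableEq ι]
    (γ : ι → ℝ) : ‖toEuclideanCLM (𝕜 := ℝ) (diagonal γ)‖ ≤ ⨆ i, |γ i| := by
  rw [l2_opNorm_toEuclideanCLM, l2_opNorm_diagonal]
  exact pi_norm_le_iSup_abs γ

lemma Real.div_sqrt_le_sqrt_sq_div_add {a ε : ℝ} (n : ℝ) (ha : 0 ≤ a) (hε : 0 ≤ ε) :
    a / √n ≤ √(a ^ 2 / n + ε) := by
  rw [← Real.sqrt_sq ha, ← Real.sqrt_div (sq_nonneg a), Real.sqrt_sq ha]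
  exact Real.sqrt_le_sqrt (le_add_of_nonneg_right hε)

section Deflation

variable {E : Type*} [NormedAddCommGroup E] [InnerProductSpace ℝ E]

noncomputable def deflation (t : ℝ) (x : E) : E →L[ℝ] E :=
  ContinuousLinearMap.id ℝ E - t • (innerSL ℝ x).smulRight x

@[simp]
lemma deflation_apply (t : ℝ) (x v : E) : deflation t x v = v - (t * ⟪x, v⟫) • x := by
  simp [deflation, mul_smul]

lemma norm_deflation_apply_le {t : ℝ} {x : E} (ht : 0 ≤ t) (htx : t * ‖x‖ ^ 2 ≤ 2) (v : E) :
    ‖deflation t x v‖ ≤ ‖v‖ := by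
  have key : ‖deflation t x v‖ ^ 2 = ‖v‖ ^ 2 - t * ⟪x, v⟫ ^ 2 * (2 - t * ‖x‖ ^ 2) := by
    rw [deflation_apply, norm_sub_sq_real, real_inner_smul_right, real_inner_comm, norm_smul,
      mul_pow, Real.norm_eq_abs, sq_abs]
    ring
  refine (pow_le_pow_iff_left₀ (norm_nonneg _) (norm_nonneg _) two_ne_zero).mp ?_
  have : 0 ≤ t * ⟪x, v⟫ ^ 2 * (2 - t * ‖x‖ ^ 2) := by
    have := sub_nonneg.mpr htx
    positivity
  linarith

lemma norm_deflation_le_one {t : ℝ} {x : E} (ht : 0 ≤ t) (htx : t * ‖x‖ ^ 2 ≤ 2) :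
    ‖deflation t x‖ ≤ 1 :=
  ContinuousLinearMap.opNorm_le_bound _ zero_le_one fun v => by
    simpa using norm_deflation_apply_le ht htx v

end Deflation

section RMSNormalization

variable {E F : Type*} [NormedAddCommGroup E] [InnerProductSpace ℝ E]
  [NormedAddCommGroup F] [NormedSpace ℝ F]

theorem HasFDerivAt.inv_smul_apply_of_radial {ρ : E → ℝ} {x : E} {s : ℝ}
    (hρ : HasFDerivAt ρ (s • innerSL ℝ x) x) (hρx : ρ x ≠ 0) (A : E →L[ℝ] F) :
    HasFDerivAt (fun y => (ρ y)⁻¹ • A y) ((ρ x)⁻¹ • A ∘L deflation (s / ρ x) x) x := by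
  have hinv : HasFDerivAt (fun y => (ρ y)⁻¹) ((-(ρ x ^ 2)⁻¹) • s • innerSL ℝ x) x :=
    (hasDerivAt_inv hρx).comp_hasFDerivAt x hρ
  convert hinv.smul A.hasFDerivAt using 1
  · rfl
  ext v
  simp only [smul_apply, ContinuousLinearMap.comp_apply, deflation_apply, map_sub, map_smul,
    smul_sub, smul_smul, add_apply, ContinuousLinearMap.smulRight_apply,
    coe_innerSL_apply, smul_eq_mul]
  module

theorem hasFDerivAt_sqrt_norm_sq_div_add {x : E} {n ε : ℝ} (h : ‖x‖ ^ 2 / n + ε ≠ 0) :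
    HasFDerivAt (fun y : E => √(‖y‖ ^ 2 / n + ε))
      ((n⁻¹ / √(‖x‖ ^ 2 / n + ε)) • innerSL ℝ x) x := by
  have hsq : HasFDerivAt (fun y : E => ‖y‖ ^ 2) (2 • innerSL ℝ x) x :=
    (hasStrictFDerivAt_norm_sq x).hasFDerivAt
  have := ((hsq.mul_const n⁻¹).add_const ε).sqrt (by rwa [← div_eq_mul_inv])
  simp only [← div_eq_mul_inv] at this
  convert this using 1
  ext v
  simp only [smul_apply, coe_innerSL_apply, smul_eq_mul, nsmul_eq_mul, Nat.cast_ofNat]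
  field_simp

theorem norm_fderiv_inv_sqrt_norm_sq_div_add_smul_le {n ε : ℝ} (hn : 0 ≤ n) (hε : 0 < ε)
    (A : E →L[ℝ] F) (x : E) :
    ‖fderiv ℝ (fun y => (√(‖y‖ ^ 2 / n + ε))⁻¹ • A y) x‖ ≤ ‖A‖ / √(‖x‖ ^ 2 / n + ε) := by
  set r := √(‖x‖ ^ 2 / n + ε)
  have hu : 0 < ‖x‖ ^ 2 / n + ε := by positivity
  have hr : 0 < r := Real.sqrt_pos.2 hu
  have ht : n⁻¹ / r / r * ‖x‖ ^ 2 ≤ 2 :=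
    calc n⁻¹ / r / r * ‖x‖ ^ 2 = (‖x‖ ^ 2 / n) / (‖x‖ ^ 2 / n + ε) := by
          rw [div_div, ← sq, Real.sq_sqrt hu.le]; ring
      _ ≤ 1 := div_le_one_of_le₀ (by linarith) hu.le
      _ ≤ 2 := one_le_two
  rw [((hasFDerivAt_sqrt_norm_sq_div_add hu.ne').inv_smul_apply_of_radial hr.ne' A).fderiv]
  calc ‖r⁻¹ • A ∘L deflation (n⁻¹ / r / r) x‖ ≤ r⁻¹ * (‖A‖ * ‖deflation (n⁻¹ / r / r) x‖) := by
        rw [norm_smul, norm_inv, Real.norm_of_nonneg hr.le]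
        gcongr
        exact A.opNorm_comp_le _
    _ ≤ r⁻¹ * (‖A‖ * 1) := by
        gcongr
        exact norm_deflation_le_one (by positivity) ht
    _ = ‖A‖ / r := by ring

end RMSNormalization

/-- **RMSNorm gradient compression scales inversely with activation norm.**
With `rms x = √(‖x‖²/d + ε)` and `RMSNorm(x)_i = γ_i x_i / rms x`, one has
`rms x ≥ ‖x‖ / √d` for every `x`, and consequently for every `x ≠ 0` the operator norm
of the Fréchet derivative of `RMSNorm` at `x` is at most `√d · ‖γ‖_∞ / ‖x‖`. -/
theorem rmsnorm_fderiv_opNorm_le_inv_norm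
    {d : ℕ} (hd : 1 ≤ d) (γ : Fin d → ℝ) (ε : ℝ) (hε : 0 < ε)
    (rms : EuclideanSpace ℝ (Fin d) → ℝ)
    (hrms : ∀ x, rms x = Real.sqrt (‖x‖ ^ 2 / d + ε))
    (RMSNorm : EuclideanSpace ℝ (Fin d) → EuclideanSpace ℝ (Fin d))
    (hRMS : ∀ x, ∀ i, RMSNorm x i = γ i * x i / rms x) :
    (∀ x : EuclideanSpace ℝ (Fin d), ‖x‖ / Real.sqrt d ≤ rms x) ∧
    ∀ x : EuclideanSpace ℝ (Fin d), x ≠ 0 →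
      ‖fderiv ℝ RMSNorm x‖ ≤ Real.sqrt d * (⨆ i, |γ i|) / ‖x‖ := by
  have hrms_ge (x : EuclideanSpace ℝ (Fin d)) : ‖x‖ / √d ≤ rms x :=
    (hrms x).symm ▸ Real.div_sqrt_le_sqrt_sq_div_add _ (norm_nonneg x) hε.le
  refine ⟨hrms_ge, fun x hx => ?_⟩
  let Γ := Matrix.toEuclideanCLM (n := Fin d) (𝕜 := ℝ) (Matrix.diagonal γ)
  have hRMS_eq : RMSNorm = fun y => (√(‖y‖ ^ 2 / d + ε))⁻¹ • Γ y := by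
    funext y
    ext i
    simp [hRMS, hrms, Γ, Matrix.mulVec_diagonal, div_eq_inv_mul]
  have hx_rms : 0 < ‖x‖ / √d := by
    have : (0 : ℝ) < d := by exact_mod_cast hd
    positivity
  calc ‖fderiv ℝ RMSNorm x‖ ≤ ‖Γ‖ / rms x := by
        rw [hRMS_eq, hrms]
        exact norm_fderiv_inv_sqrt_norm_sq_div_add_smul_le d.cast_nonneg hε Γ x
    _ ≤ (⨆ i, |γ i|) / (‖x‖ / √d) := by
        have hD := Matrix.norm_toEuclideanCLM_diagonal_le γ
        gcongr
        exacts [(norm_nonneg _).trans hD, hrms_ge x]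
    _ = √d * (⨆ i, |γ i|) / ‖x‖ := by field_simp
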